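/- arXiv:2604.08505 — 3 statements merged into one kernel-verified Lean document; each statement's English description precedes it below -/
import Mathlib

section
/- Let μ be a probability measure on [0,1]^d whose marginal on the first d-1 coordinates equals λ_{d-1}, and let τ be a probability distribution on {1,...,N}^d satisfying the uniformity condition w.r.t. coordinate d, with associated affine maps f_i(x)_j = (i_j - 1 + x_j)/N. Then the measure V_τ(μ) := Σ_i τ(i) μ^{f_i} (sum of push-forwards) again has its marginal on the first d-1 coordinates equal to λ_{d-1}. -/
open MeasureTheory
open scoped ENNReal

/-- The uniform (Lebesgue) measure on the cube `[0,1]^n`, as a product measure. -/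
noncomputable def unifCube (n : ℕ) : Measure (Fin n → ℝ) :=
  Measure.pi fun _ => volume.restrict (Set.Icc (0 : ℝ) 1)

/-- The canonical subcube similarity `f_i` of ratio `1/N` associated to a multi-index
`i ∈ {1,…,N}^d` (encoded as `i : Fin d → Fin N`, so `i j` corresponds to `i_j - 1`):
`f_i(x)_j = (i_j - 1 + x_j)/N`. -/
noncomputable def subcubeMap (d N : ℕ) (i : Fin d → Fin N) (x : Fin d → ℝ) :
    Fin d → ℝ :=
  fun j => ((i j : ℝ) + x j) / N

lemma vol_preimage_phi (N : ℕ) (hN : 0 < N) (c : ℝ) (A : Set ℝ) :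
    volume ((fun x : ℝ => (c + x) / N) ⁻¹' A) = (N : ℝ≥0∞) * volume A := by
  have h : (fun x : ℝ => (c + x) / N) ⁻¹' A
      = (fun x : ℝ => c + x) ⁻¹' ((· * (N : ℝ)⁻¹) ⁻¹' A) := by
    ext x; simp [div_eq_mul_inv]
  have hN' : ((N : ℝ)⁻¹ : ℝ) ≠ 0 := by positivity
  rw [h, measure_preimage_add, Real.volume_preimage_mul_right hN']
  simp [abs_of_nonneg (by positivity : (0:ℝ) ≤ (N:ℝ))]

lemma iUnion_Ioc_fin (N : ℕ) (hN : 0 < N) :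
    (⋃ l : Fin N, Set.Ioc ((l : ℝ) / N) (((l : ℝ) + 1) / N)) = Set.Ioc (0 : ℝ) 1 := by
  have hNr : (0 : ℝ) < N := by exact_mod_cast hN
  ext x
  simp only [Set.mem_iUnion, Set.mem_Ioc]
  constructor
  · rintro ⟨l, h1, h2⟩
    have hl0 : (0 : ℝ) ≤ (l : ℝ) / N := by positivity
    have hlN : ((l : ℝ) + 1) / N ≤ 1 := by
      rw [div_le_one hNr]
      have : (l : ℕ) + 1 ≤ N := l.isLt
      exact_mod_cast this
    exact ⟨lt_of_le_of_lt hl0 h1, le_trans h2 hlN⟩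
  · rintro ⟨h1, h2⟩
    have hx0 : (0 : ℝ) < (N : ℝ) * x := by positivity
    set m : ℕ := ⌈(N : ℝ) * x⌉₊ with hm
    have hm1 : 1 ≤ m := by
      rw [hm, Nat.one_le_ceil_iff]; exact hx0
    have hmN : m ≤ N := by
      rw [hm, Nat.ceil_le]
      nlinarith
    refine ⟨⟨m - 1, by omega⟩, ?_, ?_⟩
    · rw [div_lt_iff₀ hNr]
      have hlt : (m : ℝ) < (N : ℝ) * x + 1 := by
        have := Nat.ceil_lt_add_one (le_of_lt hx0)
        rw [← hm] at this; linarith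
      have hcast : ((⟨m - 1, by omega⟩ : Fin N) : ℝ) = (m : ℝ) - 1 := by
        simp only [Fin.val_mk]
        push_cast [Nat.cast_sub hm1]
        ring
      rw [hcast]; linarith [mul_comm (N:ℝ) x]
    · rw [le_div_iff₀ hNr]
      have hle : (N : ℝ) * x ≤ (m : ℝ) := Nat.le_ceil _
      have hcast : ((⟨m - 1, by omega⟩ : Fin N) : ℝ) = (m : ℝ) - 1 := by
        simp only [Fin.val_mk]
        push_cast [Nat.cast_sub hm1]
        ring
      rw [hcast]; linarith [mul_comm (N:ℝ) x]


lemma oneD (N : ℕ) (hN : 0 < N) {A : Set ℝ} (hA : MeasurableSet A) :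
    ∑ l : Fin N, (N : ℝ≥0∞)⁻¹ *
        (volume.restrict (Set.Icc (0 : ℝ) 1)) ((fun x : ℝ => ((l : ℝ) + x) / N) ⁻¹' A)
      = (volume.restrict (Set.Icc (0 : ℝ) 1)) A := by
  have hNr : (0 : ℝ) < N := by exact_mod_cast hN
  have hφ : ∀ l : Fin N, Measurable fun x : ℝ => ((l : ℝ) + x) / N := fun l =>
    (measurable_const.add measurable_id).div_const _
  have hNne : (N : ℝ≥0∞) ≠ 0 := Nat.cast_ne_zero.mpr hN.ne'
  -- each term equals volume (A ∩ Ioc (l/N) ((l+1)/N))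
  have hterm : ∀ l : Fin N,
      (N : ℝ≥0∞)⁻¹ *
        (volume.restrict (Set.Icc (0 : ℝ) 1)) ((fun x : ℝ => ((l : ℝ) + x) / N) ⁻¹' A)
      = volume (A ∩ Set.Ioc ((l : ℝ) / N) (((l : ℝ) + 1) / N)) := by
    intro l
    rw [Measure.restrict_apply ((hφ l) hA)]
    have hIcc : (fun x : ℝ => ((l : ℝ) + x) / N) ⁻¹' (Set.Icc ((l : ℝ) / N) (((l : ℝ) + 1) / N))
        = Set.Icc (0 : ℝ) 1 := by
      ext x
      simp only [Set.mem_preimage, Set.mem_Icc]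
      rw [div_le_div_iff_of_pos_right hNr, div_le_div_iff_of_pos_right hNr]
      constructor <;> intro h <;> constructor <;> linarith [h.1, h.2]
    have hset : (fun x : ℝ => ((l : ℝ) + x) / N) ⁻¹' A ∩ Set.Icc (0 : ℝ) 1
        = (fun x : ℝ => ((l : ℝ) + x) / N) ⁻¹' (A ∩ Set.Icc ((l : ℝ) / N) (((l : ℝ) + 1) / N)) := by
      rw [Set.preimage_inter, hIcc]
    rw [hset, vol_preimage_phi N hN, ← mul_assoc, ENNReal.inv_mul_cancel hNne (by simp), one_mul]
    -- now  volume (A ∩ Icc ..) = volume (A ∩ Ioc ..)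
    refine measure_congr ?_
    exact (Filter.EventuallyEq.refl _ A).inter (MeasureTheory.Ioc_ae_eq_Icc).symm
  simp_rw [hterm]
  have key : ∀ a b : Fin N, (a : ℕ) < (b : ℕ) →
      min (((a : ℝ) + 1) / N) (((b : ℝ) + 1) / N) ≤ max ((a : ℝ) / N) ((b : ℝ) / N) := by
    intro a b h
    have h1 : ((a : ℝ) + 1) / N ≤ (b : ℝ) / N := by
      rw [div_le_div_iff_of_pos_right hNr]
      have : (a : ℕ) + 1 ≤ (b : ℕ) := h
      exact_mod_cast this
    exact le_trans (min_le_left _ _) (le_trans h1 (le_max_right _ _))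
  have hdisj : Pairwise (Function.onFun Disjoint
      fun l : Fin N => A ∩ Set.Ioc ((l : ℝ) / N) (((l : ℝ) + 1) / N)) := by
    intro a b hab
    refine Set.disjoint_of_subset Set.inter_subset_right Set.inter_subset_right ?_
    rw [Set.Ioc_disjoint_Ioc]
    rcases Nat.lt_or_ge (a : ℕ) (b : ℕ) with h | h
    · exact key a b h
    · have h' : (b : ℕ) < (a : ℕ) := lt_of_le_of_ne h (fun hh => hab (Fin.ext hh.symm))
      rw [min_comm, max_comm]
      exact key b a h'
  have hmeas : ∀ l : Fin N,
      MeasurableSet (A ∩ Set.Ioc ((l : ℝ) / N) (((l : ℝ) + 1) / N)) :=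
    fun l => hA.inter measurableSet_Ioc
  have hsum := measure_iUnion (μ := volume) hdisj hmeas
  rw [tsum_fintype] at hsum
  rw [← hsum, ← Set.inter_iUnion, iUnion_Ioc_fin N hN, Measure.restrict_apply hA]
  refine measure_congr ?_
  exact (Filter.EventuallyEq.refl _ A).inter MeasureTheory.Ioc_ae_eq_Icc

/-- with `d = n + 1 ≥ 3`, let `μ` be a probability measure on `[0,1]^d`
whose marginal on the first `d-1` coordinates is `λ_{d-1}`, and let `τ` satisfy the
uniformity condition w.r.t. coordinate `d`. Then `V_τ(μ) = Σ_i τ(i)·μ^{f_i}` again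
has marginal `λ_{d-1}` on the first `d-1` coordinates. -/
theorem stmt11 (n N : ℕ) (hn : 2 ≤ n) (hN : 2 ≤ N)
    (μ : Measure (Fin (n + 1) → ℝ)) [IsProbabilityMeasure μ]
    (hcube : μ (Set.univ.pi fun _ => Set.Icc (0 : ℝ) 1) = 1)
    (hμ : Measure.map (fun x => fun k : Fin n => x k.castSucc) μ = unifCube n)
    (τ : (Fin (n + 1) → Fin N) → ℝ≥0∞)
    (hτ : ∀ i : Fin (n + 1) → Fin N,
      ∑ l : Fin N, τ (Function.update i (Fin.last n) l) = ((N : ℝ≥0∞) ^ n)⁻¹) :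
    Measure.map (fun x => fun k : Fin n => x k.castSucc)
        (∑ i : Fin (n + 1) → Fin N, τ i • Measure.map (subcubeMap (n + 1) N i) μ) =
      unifCube n := by
  classical
  have hN0 : 0 < N := by omega
  haveI : NeZero N := ⟨hN0.ne'⟩
  set π : (Fin (n + 1) → ℝ) → (Fin n → ℝ) := fun x => fun k : Fin n => x k.castSucc with hπdef
  have hπ : Measurable π := measurable_pi_lambda _ fun k => measurable_pi_apply _
  have hf : ∀ i : Fin (n + 1) → Fin N, Measurable (subcubeMap (n + 1) N i) :=
    fun i => measurable_pi_lambda _ fun j =>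
      (measurable_const.add (measurable_pi_apply j)).div_const _
  have hφ : ∀ c : ℝ, Measurable fun x : ℝ => (c + x) / N := fun c =>
    (measurable_const.add measurable_id).div_const _
  rw [show unifCube n = Measure.pi fun _ : Fin n => volume.restrict (Set.Icc (0 : ℝ) 1) from rfl]
  refine (Measure.pi_eq fun s hs => ?_).symm
  have hrect : MeasurableSet (Set.univ.pi s) := MeasurableSet.univ_pi hs
  rw [Measure.map_apply hπ hrect, Measure.finset_sum_apply]
  have hterm : ∀ i : Fin (n + 1) → Fin N,
      (τ i • Measure.map (subcubeMap (n + 1) N i) μ) (π ⁻¹' Set.univ.pi s)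
        = τ i * ∏ k : Fin n,
            (volume.restrict (Set.Icc (0 : ℝ) 1))
              ((fun x : ℝ => ((i k.castSucc : ℝ) + x) / N) ⁻¹' s k) := by
    intro i
    rw [Measure.smul_apply, smul_eq_mul,
      Measure.map_apply (hf i) (hπ hrect)]
    have hpre : subcubeMap (n + 1) N i ⁻¹' (π ⁻¹' Set.univ.pi s)
        = π ⁻¹' (Set.univ.pi fun k : Fin n =>
            (fun x : ℝ => ((i k.castSucc : ℝ) + x) / N) ⁻¹' s k) := by
      ext x
      simp [subcubeMap, Set.mem_pi, π]
    have hT : MeasurableSet (Set.univ.pi fun k : Fin n =>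
        (fun x : ℝ => ((i k.castSucc : ℝ) + x) / N) ⁻¹' s k) :=
      MeasurableSet.univ_pi fun k => (hφ _) (hs k)
    rw [hpre, ← Measure.map_apply hπ hT, hμ,
      show unifCube n = Measure.pi fun _ : Fin n => volume.restrict (Set.Icc (0 : ℝ) 1) from rfl,
      Measure.pi_pi]
  simp_rw [hterm]
  -- reindex the sum over multi-indices via snoc
  have hsum1 : ∑ i : Fin (n + 1) → Fin N,
      τ i * ∏ k : Fin n, (volume.restrict (Set.Icc (0 : ℝ) 1))
        ((fun x : ℝ => ((i k.castSucc : ℝ) + x) / N) ⁻¹' s k)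
    = ∑ p : Fin N × (Fin n → Fin N),
        τ (Fin.snoc p.2 p.1) * ∏ k : Fin n, (volume.restrict (Set.Icc (0 : ℝ) 1))
          ((fun x : ℝ => ((p.2 k : ℝ) + x) / N) ⁻¹' s k) := by
    rw [← Equiv.sum_comp (Fin.snocEquiv fun _ => Fin N)]
    refine Finset.sum_congr rfl fun p _ => ?_
    simp [Fin.snocEquiv, Fin.snoc_castSucc]
  rw [hsum1, Fintype.sum_prod_type_right]
  have hsum2 : ∀ f : Fin n → Fin N,
      ∑ l : Fin N, τ (Fin.snoc f l) = ((N : ℝ≥0∞) ^ n)⁻¹ := by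
    intro f
    have := hτ (Fin.snoc f 0)
    simpa [Fin.update_snoc_last] using this
  have hsum3 : ∑ f : Fin n → Fin N,
      (∑ l : Fin N, τ (Fin.snoc f l)) * ∏ k : Fin n, (volume.restrict (Set.Icc (0 : ℝ) 1))
        ((fun x : ℝ => ((f k : ℝ) + x) / N) ⁻¹' s k)
    = ∏ k : Fin n, (volume.restrict (Set.Icc (0 : ℝ) 1)) (s k) := by
    have hrw : ∀ f : Fin n → Fin N,
        (∑ l : Fin N, τ (Fin.snoc f l)) * ∏ k : Fin n, (volume.restrict (Set.Icc (0 : ℝ) 1))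
          ((fun x : ℝ => ((f k : ℝ) + x) / N) ⁻¹' s k)
        = ∏ k : Fin n, (N : ℝ≥0∞)⁻¹ * (volume.restrict (Set.Icc (0 : ℝ) 1))
            ((fun x : ℝ => ((f k : ℝ) + x) / N) ⁻¹' s k) := by
      intro f
      rw [hsum2 f, Finset.prod_mul_distrib, Finset.prod_const, Finset.card_univ,
        Fintype.card_fin, ← ENNReal.inv_pow]
    simp_rw [hrw]
    have hper : ∀ k : Fin n, (volume.restrict (Set.Icc (0 : ℝ) 1)) (s k)
        = ∑ l : Fin N, (N : ℝ≥0∞)⁻¹ * (volume.restrict (Set.Icc (0 : ℝ) 1))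
            ((fun x : ℝ => ((l : ℝ) + x) / N) ⁻¹' s k) :=
      fun k => (oneD N hN0 (hs k)).symm
    rw [show (∏ k : Fin n, (volume.restrict (Set.Icc (0 : ℝ) 1)) (s k))
        = ∏ k : Fin n, ∑ l : Fin N, (N : ℝ≥0∞)⁻¹ * (volume.restrict (Set.Icc (0 : ℝ) 1))
            ((fun x : ℝ => ((l : ℝ) + x) / N) ⁻¹' s k)
      from Finset.prod_congr rfl fun k _ => hper k]
    rw [Finset.prod_univ_sum, Fintype.piFinset_univ]
  rw [← hsum3]
  refine Finset.sum_congr rfl fun f _ => ?_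
  rw [Finset.sum_mul]
end

section
/- If τ is a probability distribution on {1,...,N}^d with uniformity condition w.r.t. every coordinate, then the Markov operator V_τ(μ) = Σ_i τ(i) μ^{f_i} (with f_i the canonical subcube similarities with ratio 1/N) maps the set P_d^{λ_{d-1}} of probability measures on [0,1]^d with all (d-1)-dimensional marginals equal to λ_{d-1} into itself. -/
open MeasureTheory
open scoped ENNReal

/-- `μ ∈ P_{n+1}^{λ_n}`: every `n`-dimensional marginal of `μ` equals `λ_n`. -/
def allMarginalsUniform (n : ℕ) (μ : Measure (Fin (n + 1) → ℝ)) : Prop :=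
  ∀ j : Fin (n + 1),
    Measure.map (fun x => fun k : Fin n => x (j.succAbove k)) μ = unifCube n

/-!
The `j`-th marginal of `μ^{f_i}` is the image of the `j`-th marginal `λ_n` of `μ` under the
`n`-dimensional subcube map indexed by `i` with its `j`-th entry deleted. Summing first over that
deleted entry, the uniformity condition turns the `j`-th marginal of `V_τ μ` into
`N^{-n} Σ_{i'} (λ_n)^{f_{i'}}`, which is `λ_n` because the subcubes of side `1/N` tile `[0,1]^n`.
Being a product statement, this reduces to the tiling of `[0,1]` by the intervals
`[l/N, (l+1)/N]`. The total mass can be read off any marginal.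
-/

open Set

theorem Real.map_volume_add_div (c : ℝ) {a : ℝ} (ha : 0 < a) :
    (volume : Measure ℝ).map (fun t => (c + t) / a) = ENNReal.ofReal a • volume := by
  have hcomp : (fun t : ℝ => (c + t) / a) = (fun u => a⁻¹ * u) ∘ (c + ·) := by
    funext t; simp [div_eq_inv_mul]
  rw [hcomp, ← Measure.map_map (by fun_prop) (by fun_prop), map_add_left_eq_self,
    Real.map_volume_mul_left (inv_ne_zero ha.ne'), inv_inv, abs_of_pos ha]

theorem MeasureTheory.Measure.sum_restrict_Ioc_of_monotone {α : Type*} [TopologicalSpace α]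
    [LinearOrder α] [OrderClosedTopology α] [MeasurableSpace α] [OpensMeasurableSpace α]
    (μ : Measure α) {a : ℕ → α} (ha : Monotone a) (k : ℕ) :
    ∑ l ∈ Finset.range k, μ.restrict (Ioc (a l) (a (l + 1))) =
      μ.restrict (Ioc (a 0) (a k)) := by
  induction k with
  | zero => simp
  | succ k ih =>
    rw [Finset.sum_range_succ, ih, ← Measure.restrict_union
      (Ioc_disjoint_Ioc_of_le le_rfl) measurableSet_Ioc,
      Ioc_union_Ioc_eq_Ioc (ha (Nat.zero_le k)) (ha k.le_succ)]

theorem MeasureTheory.Measure.sum_smul_pi_eq_pi {ι κ α : Type*} [Fintype ι] [DecidableEq ι]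
    [Fintype κ] [MeasurableSpace α] {μ : Measure α} [SigmaFinite μ] {ν : κ → Measure α}
    [∀ l, SigmaFinite (ν l)] {c : ℝ≥0∞} (h : ∑ l, c • ν l = μ) :
    ∑ i : ι → κ, c ^ Fintype.card ι • Measure.pi (fun j => ν (i j)) =
      Measure.pi (fun _ : ι => μ) := by
  refine (Measure.pi_eq fun s _ => ?_).symm
  simp only [← h, Measure.finsetSum_apply, Measure.smul_apply, Measure.pi_pi, smul_eq_mul,
    Finset.prod_univ_sum, Finset.prod_mul_distrib, Finset.prod_const, Finset.card_univ,
    Fintype.piFinset_univ]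

theorem Fin.sum_pi_eq_sum_sum_insertNth {n : ℕ} {α M : Type*} [Fintype α] [AddCommMonoid M]
    (j : Fin (n + 1)) (g : (Fin (n + 1) → α) → M) :
    ∑ i, g i = ∑ i' : Fin n → α, ∑ l, g (j.insertNth l i') := by
  rw [← (Fin.insertNthEquiv (fun _ => α) j).sum_comp, Fintype.sum_prod_type_right]
  rfl

theorem Fin.measurable_removeNth {n : ℕ} {α : Type*} [MeasurableSpace α] (j : Fin (n + 1)) :
    Measurable (j.removeNth : (Fin (n + 1) → α) → Fin n → α) :=
  measurable_pi_lambda _ fun _ => measurable_pi_apply _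

theorem measurable_subcubeMap {d N : ℕ} (i : Fin d → Fin N) :
    Measurable (subcubeMap d N i) := by
  unfold subcubeMap
  fun_prop

theorem removeNth_comp_subcubeMap {n N : ℕ} (j : Fin (n + 1)) (i : Fin (n + 1) → Fin N) :
    j.removeNth ∘ subcubeMap (n + 1) N i = subcubeMap n N (j.removeNth i) ∘ j.removeNth :=
  rfl

theorem sum_smul_map_add_div_restrict_Icc {N : ℕ} (hN : 0 < N) :
    ∑ l : Fin N, (N : ℝ≥0∞)⁻¹ •
        (volume.restrict (Icc (0 : ℝ) 1)).map (fun t => ((l : ℝ) + t) / N) =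
      volume.restrict (Icc (0 : ℝ) 1) := by
  have hN' : (0 : ℝ) < N := by exact_mod_cast hN
  have hpiece (c : ℝ) :
      (N : ℝ≥0∞)⁻¹ • (volume.restrict (Icc (0 : ℝ) 1)).map (fun t => (c + t) / N) =
        volume.restrict (Ioc (c / N) ((c + 1) / N)) := by
    have hpre : (fun t : ℝ => (c + t) / N) ⁻¹' Icc (c / N) ((c + 1) / N) = Icc 0 1 := by
      ext t
      simp only [mem_preimage, mem_Icc, div_le_div_iff_of_pos_right hN']
      constructor <;> rintro ⟨h₀, h₁⟩ <;> constructor <;> linarith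
    rw [← hpre, ← Measure.restrict_map (by fun_prop) measurableSet_Icc,
      Real.map_volume_add_div c hN', ENNReal.ofReal_natCast, Measure.restrict_smul, smul_smul,
      ENNReal.inv_mul_cancel (by exact_mod_cast hN.ne') (ENNReal.natCast_ne_top N), one_smul,
      Measure.restrict_congr_set Ioc_ae_eq_Icc]
  simp_rw [hpiece]
  rw [Fin.sum_univ_eq_sum_range
      (fun l : ℕ => volume.restrict (Ioc ((l : ℝ) / N) ((l + 1) / N))),
    ← Measure.restrict_congr_set Ioc_ae_eq_Icc]
  convert Measure.sum_restrict_Ioc_of_monotone volume (a := fun l : ℕ => (l : ℝ) / N)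
    (fun k l hkl => div_le_div_of_nonneg_right (by exact_mod_cast hkl) hN'.le) N using 2
  · push_cast; rfl
  · rw [Nat.cast_zero, zero_div, div_self hN'.ne']

theorem sum_smul_map_subcubeMap_unifCube {n N : ℕ} (hN : 0 < N) :
    ∑ i : Fin n → Fin N, ((N : ℝ≥0∞) ^ n)⁻¹ • (unifCube n).map (subcubeMap n N i) =
      unifCube n := by
  have hmap (i : Fin n → Fin N) : (unifCube n).map (subcubeMap n N i) =
      Measure.pi fun j =>
        (volume.restrict (Icc (0 : ℝ) 1)).map (fun t => ((i j : ℝ) + t) / N) :=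
    Measure.pi_map_pi (f := fun j t => ((i j : ℝ) + t) / N) fun _ => by fun_prop
  have hc : ((N : ℝ≥0∞) ^ n)⁻¹ = (N : ℝ≥0∞)⁻¹ ^ Fintype.card (Fin n) := by
    rw [Fintype.card_fin, ENNReal.inv_pow]
  simp_rw [hmap, hc]
  exact Measure.sum_smul_pi_eq_pi (sum_smul_map_add_div_restrict_Icc hN)

instance isProbabilityMeasure_unifCube (n : ℕ) : IsProbabilityMeasure (unifCube n) :=
  ⟨by simp [unifCube, Measure.pi_univ]⟩

theorem allMarginalsUniform.isProbabilityMeasure {n : ℕ} {ν : Measure (Fin (n + 1) → ℝ)}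
    (h : allMarginalsUniform n ν) : IsProbabilityMeasure ν := by
  have : IsProbabilityMeasure (ν.map fun x k => x ((0 : Fin (n + 1)).succAbove k)) := by
    rw [h 0]
    infer_instance
  exact Measure.isProbabilityMeasure_of_map fun x k => x ((0 : Fin (n + 1)).succAbove k)

theorem map_removeNth_sum_smul_map_subcubeMap {n N : ℕ} (hN : 0 < N) (j : Fin (n + 1))
    {τ : (Fin (n + 1) → Fin N) → ℝ≥0∞}
    (hτ : ∀ i, ∑ l : Fin N, τ (Function.update i j l) = ((N : ℝ≥0∞) ^ n)⁻¹)
    {μ : Measure (Fin (n + 1) → ℝ)} (hμ : μ.map j.removeNth = unifCube n) :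
    (∑ i, τ i • μ.map (subcubeMap (n + 1) N i)).map j.removeNth = unifCube n := by
  have hterm (i : Fin (n + 1) → Fin N) :
      (τ i • μ.map (subcubeMap (n + 1) N i)).map j.removeNth =
        τ i • (unifCube n).map (subcubeMap n N (j.removeNth i)) := by
    rw [Measure.map_smul, Measure.map_map (Fin.measurable_removeNth j) (measurable_subcubeMap i),
      removeNth_comp_subcubeMap, ← Measure.map_map (measurable_subcubeMap _)
      (Fin.measurable_removeNth j), hμ]
  have hτ' (i' : Fin n → Fin N) :
      ∑ l, τ (j.insertNth l i') = ((N : ℝ≥0∞) ^ n)⁻¹ := by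
    simpa [Fin.update_insertNth] using hτ (j.insertNth ⟨0, hN⟩ i')
  rw [Measure.map_finset_sum' (Fin.measurable_removeNth j).aemeasurable]
  simp_rw [hterm, Fin.sum_pi_eq_sum_sum_insertNth j (fun i => τ i • _), Fin.removeNth_insertNth,
    ← Finset.sum_smul, hτ']
  exact sum_smul_map_subcubeMap_unifCube hN

theorem stmt12_general (n N : ℕ) (hN : 2 ≤ N)
    (τ : (Fin (n + 1) → Fin N) → ℝ≥0∞)
    (hτ : ∀ (j₀ : Fin (n + 1)) (i : Fin (n + 1) → Fin N),
      ∑ l : Fin N, τ (Function.update i j₀ l) = ((N : ℝ≥0∞) ^ n)⁻¹)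
    (μ : Measure (Fin (n + 1) → ℝ))
    (hμ : allMarginalsUniform n μ) :
    IsProbabilityMeasure
        (∑ i : Fin (n + 1) → Fin N, τ i • Measure.map (subcubeMap (n + 1) N i) μ) ∧
      allMarginalsUniform n
        (∑ i : Fin (n + 1) → Fin N, τ i • Measure.map (subcubeMap (n + 1) N i) μ) := by
  have hmarg : allMarginalsUniform n
      (∑ i : Fin (n + 1) → Fin N, τ i • Measure.map (subcubeMap (n + 1) N i) μ) := fun j =>
    map_removeNth_sum_smul_map_subcubeMap (by omega) j (hτ j) (hμ j)
  exact ⟨hmarg.isProbabilityMeasure, hmarg⟩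

/-- with `d = n + 1 ≥ 3`, if `τ` satisfies the uniformity condition
w.r.t. every coordinate, then the Markov operator `V_τ(μ) = Σ_i τ(i)·μ^{f_i}` maps
`P_d^{λ_{d-1}}` into itself. -/
theorem stmt12 (n N : ℕ) (hn : 2 ≤ n) (hN : 2 ≤ N)
    (τ : (Fin (n + 1) → Fin N) → ℝ≥0∞)
    (hτ : ∀ (j₀ : Fin (n + 1)) (i : Fin (n + 1) → Fin N),
      ∑ l : Fin N, τ (Function.update i j₀ l) = ((N : ℝ≥0∞) ^ n)⁻¹)
    (μ : Measure (Fin (n + 1) → ℝ)) [IsProbabilityMeasure μ]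
    (hμ : allMarginalsUniform n μ) :
    IsProbabilityMeasure
        (∑ i : Fin (n + 1) → Fin N, τ i • Measure.map (subcubeMap (n + 1) N i) μ) ∧
      allMarginalsUniform n
        (∑ i : Fin (n + 1) → Fin N, τ i • Measure.map (subcubeMap (n + 1) N i) μ) :=
  stmt12_general n N hN τ hτ μ hμ
end

section
/- Let ε be a permutation of {1,...,N} (N ≥ 3) in which every point has minimal period N (i.e., ε is an N-cycle), and let τ be the uniform distribution on the set {(i, ε^m(i), m) : i, m ∈ {1,...,N}} ⊆ {1,...,N}^3. Then τ satisfies the uniformity condition with respect to each of the three coordinates: for each coordinate j_0 and each fixed pair of the other indices, the sum over the j_0-th index of τ equals 1/N². -/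
/-- let `ε` be a permutation of `{1,…,N}` (encoded as a permutation of
`Fin N`) in which every point has minimal period `N` (an `N`-cycle), and let `τ` be the
uniform distribution on `{(i, ε^m(i), m) : i ∈ {1,…,N}, m ∈ {1,…,N}}`, i.e.
`τ(v) = 1/N²` if `v₂ = ε^m(v₁)` (with `m` the third coordinate) and `0` otherwise.
Then `τ` satisfies the uniformity condition w.r.t. each of the three coordinates:
for each coordinate `j₀` and each fixed pair of the other indices, the sum over the
`j₀`-th index of `τ` equals `1/N²`. -/
theorem stmt18 (N : ℕ) (hN : 3 ≤ N) (ε : Equiv.Perm (Fin N))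
    (hε : ∀ i : Fin N, Function.minimalPeriod (⇑ε) i = N)
    (τ : (Fin 3 → Fin N) → ℝ)
    (hτ : ∀ v : Fin 3 → Fin N,
      τ v = if v 1 = (ε ^ ((v 2 : ℕ) + 1)) (v 0) then ((N : ℝ) ^ 2)⁻¹ else 0) :
    ∀ (j₀ : Fin 3) (v : Fin 3 → Fin N),
      ∑ l : Fin N, τ (Function.update v j₀ l) = ((N : ℝ) ^ 2)⁻¹ := by
  have hNpos : 0 < N := by omega
  have key : ∀ x : Fin N, ∀ a b : ℕ, (ε ^ a) x = (ε ^ b) x → a % N = b % N := by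
    intro x a b h
    have hm := hε x
    have h' : (⇑ε)^[a % N] x = (⇑ε)^[b % N] x := by
      have h1 : (⇑ε)^[a % Function.minimalPeriod (⇑ε) x] x = (⇑ε)^[a] x :=
        Function.iterate_mod_minimalPeriod_eq
      have h2 : (⇑ε)^[b % Function.minimalPeriod (⇑ε) x] x = (⇑ε)^[b] x :=
        Function.iterate_mod_minimalPeriod_eq
      rw [hm] at h1 h2
      rw [h1, h2, ← Equiv.Perm.coe_pow, ← Equiv.Perm.coe_pow, h]
    have := Function.iterate_injOn_Iio_minimalPeriod (f := ⇑ε) (x := x)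
      (by rw [hm]; exact Set.mem_Iio.2 (Nat.mod_lt _ hNpos))
      (by rw [hm]; exact Set.mem_Iio.2 (Nat.mod_lt _ hNpos)) h'
    exact this
  have modeq : ∀ c : Fin N, ((c : ℕ) + 1) % N = if (c : ℕ) + 1 = N then 0 else (c : ℕ) + 1 := by
    intro c
    split_ifs with h
    · rw [h, Nat.mod_self]
    · exact Nat.mod_eq_of_lt (lt_of_le_of_ne c.isLt h)
  have uniq : ∀ x : Fin N, Function.Injective (fun m : Fin N => (ε ^ ((m : ℕ) + 1)) x) := by
    intro x a b hab
    have h := key x _ _ hab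
    rw [modeq a, modeq b] at h
    have ha := a.isLt
    have hb := b.isLt
    split_ifs at h with h1 h2 h2 <;> (apply Fin.ext; omega)
  intro j₀ v
  have hj : j₀ = 0 ∨ j₀ = 1 ∨ j₀ = 2 := by omega
  rcases hj with hj | hj | hj <;> subst hj
  · -- j₀ = 0
    simp only [hτ, Fin.isValue, Function.update_self,
      Function.update_of_ne (show (1 : Fin 3) ≠ 0 by decide),
      Function.update_of_ne (show (2 : Fin 3) ≠ 0 by decide)]
    calc ∑ l : Fin N, (if v 1 = (ε ^ ((v 2 : ℕ) + 1)) l then ((N : ℝ) ^ 2)⁻¹ else 0)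
        = ∑ l : Fin N, (if (ε ^ ((v 2 : ℕ) + 1)).symm (v 1) = l then ((N : ℝ) ^ 2)⁻¹ else 0) := by
          apply Finset.sum_congr rfl; intro l _
          rw [if_congr ((Equiv.symm_apply_eq _)) rfl rfl]
      _ = ((N : ℝ) ^ 2)⁻¹ := by rw [Finset.sum_ite_eq]; simp
  · -- j₀ = 1
    simp only [hτ, Fin.isValue, Function.update_self,
      Function.update_of_ne (show (0 : Fin 3) ≠ 1 by decide),
      Function.update_of_ne (show (2 : Fin 3) ≠ 1 by decide)]
    rw [Finset.sum_ite_eq']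
    simp
  · -- j₀ = 2
    simp only [hτ, Fin.isValue, Function.update_self,
      Function.update_of_ne (show (0 : Fin 3) ≠ 2 by decide),
      Function.update_of_ne (show (1 : Fin 3) ≠ 2 by decide)]
    set e : Fin N ≃ Fin N :=
      Equiv.ofBijective _ (Finite.injective_iff_bijective.1 (uniq (v 0))) with he
    calc ∑ l : Fin N, (if v 1 = (ε ^ ((l : ℕ) + 1)) (v 0) then ((N : ℝ) ^ 2)⁻¹ else 0)
        = ∑ l : Fin N, (if e.symm (v 1) = l then ((N : ℝ) ^ 2)⁻¹ else 0) := by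
          apply Finset.sum_congr rfl; intro l _
          refine if_congr ?_ rfl rfl
          rw [Equiv.symm_apply_eq]
          exact Iff.rfl
      _ = ((N : ℝ) ^ 2)⁻¹ := by rw [Finset.sum_ite_eq]; simp
end
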